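/- arXiv:2001.04239 — 4 statements merged into one kernel-verified Lean document; each statement's English description precedes it below -/
import Mathlib

section
/- Let 1 < p < ∞ and r ∈ (−1, p−1). Then the integral operator T defined by (Tf)(x) = ∫₀^∞ f(y)/(x+y) dy is a bounded linear operator on the weighted Lebesgue space L_p((0,∞), x^r dx); i.e., there is a constant C > 0 such that ∫₀^∞ |(Tf)(x)|^p x^r dx ≤ C^p ∫₀^∞ |f(x)|^p x^r dx for all f ∈ L_p((0,∞), x^r dx). -/
/-!
Schur's test with power test functions. Writing `k(x, y) = 1/(x + y)`, Hölder's inequality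
against the weight `y^a` gives
`|Tf(x)|^p ≤ (∫ k(x, y) |f y|^p y^{-ap} dy) · (∫ k(x, y) y^{aq} dy)^{p/q}`,
and both the inner integral and, after Tonelli, the remaining integral in `x` are computed by the
substitution `y = x t`: they are powers of `x` (resp. `y`) times `∫₀^∞ t^c/(1+t) dt` with
`c = aq` and `c = r + ap`. These moments are finite for `-1 < c < 0`, and
`-1 < r < p - 1` is exactly what allows a choice of `a` putting both exponents in that range.
-/

open MeasureTheory Set
open scoped ENNReal

section Schur

variable {α β : Type*} [MeasurableSpace α] [MeasurableSpace β] {μ : Measure α} {ν : Measure β}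

theorem ENNReal.lintegral_mul_rpow_le_weighted {p q : ℝ} (hpq : p.HolderConjugate q)
    {k f h : β → ℝ≥0∞} (hk : AEMeasurable k ν) (hf : AEMeasurable f ν) (hh : AEMeasurable h ν)
    (hh₀ : ∀ᵐ y ∂ν, h y ≠ 0) (hh_top : ∀ᵐ y ∂ν, h y ≠ ⊤) :
    (∫⁻ y, k y * f y ∂ν) ^ p ≤
      (∫⁻ y, k y * f y ^ p / h y ^ p ∂ν) * (∫⁻ y, k y * h y ^ q ∂ν) ^ (p / q) := by
  set F : β → ℝ≥0∞ := fun y ↦ k y ^ (1 / p) * f y * (h y)⁻¹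
  set G : β → ℝ≥0∞ := fun y ↦ k y ^ (1 / q) * h y
  have hFG : ∀ᵐ y ∂ν, k y * f y = (F * G) y := by
    filter_upwards [hh₀, hh_top] with y hy₀ hy_top
    calc k y * f y = k y ^ (1 / p + 1 / q) * f y * ((h y)⁻¹ * h y) := by
          rw [hpq.one_div_add_one_div, div_one, ENNReal.rpow_one,
            ENNReal.inv_mul_cancel hy₀ hy_top, mul_one]
      _ = (F * G) y := by
          rw [ENNReal.rpow_add_of_nonneg _ _ hpq.one_div_nonneg hpq.symm.one_div_nonneg]
          simp only [F, G, Pi.mul_apply]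
          ring
  have hF : ∀ y, F y ^ p = k y * f y ^ p / h y ^ p := fun y ↦ by
    rw [div_eq_mul_inv, ENNReal.mul_rpow_of_nonneg _ _ hpq.nonneg,
      ENNReal.mul_rpow_of_nonneg _ _ hpq.nonneg, ENNReal.inv_rpow, ← ENNReal.rpow_mul,
      one_div_mul_cancel hpq.ne_zero, ENNReal.rpow_one]
  have hG : ∀ y, G y ^ q = k y * h y ^ q := fun y ↦ by
    simp only [G, ENNReal.mul_rpow_of_nonneg _ _ hpq.symm.nonneg, ← ENNReal.rpow_mul,
      one_div_mul_cancel hpq.symm.ne_zero, ENNReal.rpow_one]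
  have hFm : AEMeasurable F ν := ((hk.pow_const _).mul hf).mul hh.inv
  have hGm : AEMeasurable G ν := (hk.pow_const _).mul hh
  calc (∫⁻ y, k y * f y ∂ν) ^ p
      ≤ ((∫⁻ y, F y ^ p ∂ν) ^ (1 / p) * (∫⁻ y, G y ^ q ∂ν) ^ (1 / q)) ^ p := by
        rw [lintegral_congr_ae hFG]
        exact ENNReal.rpow_le_rpow (ENNReal.lintegral_mul_le_Lp_mul_Lq ν hpq hFm hGm) hpq.nonneg
    _ = (∫⁻ y, F y ^ p ∂ν) * (∫⁻ y, G y ^ q ∂ν) ^ (p / q) := by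
        rw [ENNReal.mul_rpow_of_nonneg _ _ hpq.nonneg, ← ENNReal.rpow_mul, ← ENNReal.rpow_mul,
          one_div_mul_cancel hpq.ne_zero, ENNReal.rpow_one, one_div_mul_eq_div]
    _ = _ := by simp only [hF, hG]

theorem ENNReal.lintegral_rpow_lintegral_mul_le_of_schur [SFinite μ] [SFinite ν] {p q : ℝ}
    (hpq : p.HolderConjugate q) {K : α → β → ℝ≥0∞} (hK : Measurable (Function.uncurry K))
    {f h : β → ℝ≥0∞} {w g : α → ℝ≥0∞} {v : β → ℝ≥0∞} (hf : Measurable f) (hh : Measurable h)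
    (hw : Measurable w) (hg : Measurable g) (hv : Measurable v)
    (hh₀ : ∀ᵐ y ∂ν, h y ≠ 0) (hh_top : ∀ᵐ y ∂ν, h y ≠ ⊤) {A B : ℝ≥0∞}
    (hA : ∀ᵐ x ∂μ, ∫⁻ y, K x y * h y ^ q ∂ν ≤ A * g x ^ q)
    (hB : ∀ᵐ y ∂ν, ∫⁻ x, w x * g x ^ p * K x y ∂μ ≤ B * v y * h y ^ p) :
    ∫⁻ x, w x * (∫⁻ y, K x y * f y ∂ν) ^ p ∂μ ≤ A ^ (p / q) * B * ∫⁻ y, v y * f y ^ p ∂ν := by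
  have hpq₀ : 0 ≤ p / q := div_nonneg hpq.nonneg hpq.symm.nonneg
  calc ∫⁻ x, w x * (∫⁻ y, K x y * f y ∂ν) ^ p ∂μ
      ≤ ∫⁻ x, w x * ((∫⁻ y, K x y * f y ^ p / h y ^ p ∂ν) * (A * g x ^ q) ^ (p / q)) ∂μ := by
        refine lintegral_mono_ae ?_
        filter_upwards [hA] with x hx
        gcongr
        refine (lintegral_mul_rpow_le_weighted hpq hK.of_uncurry_left.aemeasurable hf.aemeasurable
          hh.aemeasurable hh₀ hh_top).trans ?_
        gcongr
    _ = A ^ (p / q) * ∫⁻ x, ∫⁻ y, w x * g x ^ p * (K x y * (f y ^ p / h y ^ p)) ∂ν ∂μ := by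
        rw [← lintegral_const_mul _ (by fun_prop)]
        refine lintegral_congr fun x ↦ ?_
        rw [lintegral_const_mul _ (by fun_prop), ENNReal.mul_rpow_of_nonneg _ _ hpq₀,
          ← ENNReal.rpow_mul, mul_div_cancel₀ _ hpq.symm.ne_zero]
        simp only [mul_div_assoc]
        ring
    _ = A ^ (p / q) * ∫⁻ y, (∫⁻ x, w x * g x ^ p * K x y ∂μ) * (f y ^ p / h y ^ p) ∂ν := by
        rw [lintegral_lintegral_swap (by fun_prop)]
        simp only [← mul_assoc]
        congr 1
        refine lintegral_congr fun y ↦ ?_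
        rw [lintegral_mul_const _ (by fun_prop)]
    _ ≤ A ^ (p / q) * ∫⁻ y, B * v y * h y ^ p * (f y ^ p / h y ^ p) ∂ν := by
        gcongr A ^ (p / q) * ?_
        refine lintegral_mono_ae ?_
        filter_upwards [hB] with y hy
        gcongr
    _ = A ^ (p / q) * B * ∫⁻ y, v y * f y ^ p ∂ν := by
        rw [mul_assoc (A ^ (p / q)), ← lintegral_const_mul B (by fun_prop)]
        congr 1
        refine lintegral_congr_ae ?_
        filter_upwards [hh₀, hh_top] with y hy₀ hy_top
        have : h y ^ p * (f y ^ p / h y ^ p) = f y ^ p :=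
          ENNReal.mul_div_cancel (ENNReal.rpow_pos (pos_iff_ne_zero.2 hy₀) hy_top).ne'
            (ENNReal.rpow_ne_top_of_nonneg hpq.nonneg hy_top)
        rw [mul_assoc, this, mul_assoc]

end Schur

theorem ENNReal.exists_pos_le_ofReal_rpow {D : ℝ≥0∞} (hD : D ≠ ⊤) {p : ℝ} (hp : 0 < p) :
    ∃ C : ℝ, 0 < C ∧ D ≤ ENNReal.ofReal (C ^ p) := by
  refine ⟨(D.toReal + 1) ^ (1 / p), by positivity, ?_⟩
  rw [← Real.rpow_mul (by positivity), one_div_mul_cancel hp.ne', Real.rpow_one,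
    ENNReal.le_ofReal_iff_toReal_le hD (by positivity)]
  linarith

theorem ENNReal.ofReal_rpow_rpow {y : ℝ} (hy : 0 ≤ y) (a : ℝ) {s : ℝ} (hs : 0 ≤ s) :
    ENNReal.ofReal (y ^ a) ^ s = ENNReal.ofReal (y ^ (a * s)) := by
  rw [ENNReal.ofReal_rpow_of_nonneg (Real.rpow_nonneg hy a) hs, ← Real.rpow_mul hy]

-- Equals `π / sin (π (c + 1))` for `-1 < c < 0`.
noncomputable def stieltjesMoment (c : ℝ) : ℝ≥0∞ :=
  ∫⁻ t in Ioi 0, ENNReal.ofReal (t ^ c / (1 + t))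

theorem stieltjesMoment_lt_top {c : ℝ} (hc₁ : -1 < c) (hc₀ : c < 0) : stieltjesMoment c < ⊤ := by
  have h_near : IntegrableOn (fun t : ℝ ↦ t ^ c) (Ioc 0 1) :=
    (intervalIntegrable_iff_integrableOn_Ioc_of_le zero_le_one).1
      (intervalIntegral.intervalIntegrable_rpow' hc₁)
  have h_far : IntegrableOn (fun t : ℝ ↦ t ^ (c - 1)) (Ioi 1) :=
    integrableOn_Ioi_rpow_of_lt (by linarith) one_pos
  calc stieltjesMoment c
      ≤ (∫⁻ t in Ioc 0 1, ENNReal.ofReal (t ^ c / (1 + t))) +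
          ∫⁻ t in Ioi 1, ENNReal.ofReal (t ^ c / (1 + t)) := by
        rw [stieltjesMoment, ← Ioc_union_Ioi_eq_Ioi zero_le_one]
        exact lintegral_union_le _ _ _
    _ ≤ (∫⁻ t in Ioc 0 1, ENNReal.ofReal (t ^ c)) +
          ∫⁻ t in Ioi 1, ENNReal.ofReal (t ^ (c - 1)) := by
        refine add_le_add ?_ ?_
        · refine setLIntegral_mono' measurableSet_Ioc fun t ht ↦ ENNReal.ofReal_le_ofReal ?_
          exact div_le_self (Real.rpow_nonneg ht.1.le c) (by linarith [ht.1])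
        · refine setLIntegral_mono' measurableSet_Ioi fun t (ht : 1 < t) ↦ ?_
          rw [Real.rpow_sub_one (by positivity)]
          exact ENNReal.ofReal_le_ofReal <|
            div_le_div_of_nonneg_left (Real.rpow_nonneg (by positivity) c) (by positivity)
              (by linarith)
    _ < ⊤ := ENNReal.add_lt_top.2 ⟨h_near.setLIntegral_lt_top, h_far.setLIntegral_lt_top⟩

theorem lintegral_Ioi_rpow_div_add (c : ℝ) {x : ℝ} (hx : 0 < x) :
    ∫⁻ y in Ioi 0, ENNReal.ofReal (y ^ c / (x + y)) =
      ENNReal.ofReal (x ^ c) * stieltjesMoment c := by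
  rw [← image_const_mul_Ioi_zero hx, lintegral_image_eq_lintegral_abs_deriv_mul measurableSet_Ioi
    (fun t _ ↦ ((hasDerivAt_id' t).const_mul x).hasDerivWithinAt)
    (mul_right_injective₀ hx.ne').injOn, stieltjesMoment,
    ← lintegral_const_mul' _ _ ENNReal.ofReal_ne_top]
  refine setLIntegral_congr_fun measurableSet_Ioi fun t (ht : 0 < t) ↦ ?_
  rw [← ENNReal.ofReal_mul (abs_nonneg _), ← ENNReal.ofReal_mul (by positivity)]
  congr 1
  rw [mul_one, abs_of_pos hx, Real.mul_rpow hx.le ht.le]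
  field_simp

theorem lintegral_Ioi_inv_add_mul_rpow {x : ℝ} (hx : 0 < x) (a : ℝ) {s : ℝ} (hs : 0 ≤ s) :
    ∫⁻ y in Ioi 0, ENNReal.ofReal (x + y)⁻¹ * ENNReal.ofReal (y ^ a) ^ s =
      stieltjesMoment (a * s) * ENNReal.ofReal (x ^ a) ^ s := by
  rw [ENNReal.ofReal_rpow_rpow hx.le _ hs, mul_comm, ← lintegral_Ioi_rpow_div_add _ hx]
  refine setLIntegral_congr_fun measurableSet_Ioi fun y (hy : 0 < y) ↦ ?_
  rw [ENNReal.ofReal_rpow_rpow hy.le _ hs, ← ENNReal.ofReal_mul (by positivity), inv_mul_eq_div]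

theorem lintegral_Ioi_rpow_mul_rpow_mul_inv_add {y : ℝ} (hy : 0 < y) (r a : ℝ) {s : ℝ}
    (hs : 0 ≤ s) :
    ∫⁻ x in Ioi 0, ENNReal.ofReal (x ^ r) * ENNReal.ofReal (x ^ a) ^ s * ENNReal.ofReal (x + y)⁻¹ =
      stieltjesMoment (r + a * s) * ENNReal.ofReal (y ^ r) * ENNReal.ofReal (y ^ a) ^ s := by
  rw [ENNReal.ofReal_rpow_rpow hy.le _ hs, mul_assoc, ← ENNReal.ofReal_mul (by positivity),
    ← Real.rpow_add hy, mul_comm, ← lintegral_Ioi_rpow_div_add _ hy]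
  refine setLIntegral_congr_fun measurableSet_Ioi fun x (hx : 0 < x) ↦ ?_
  rw [ENNReal.ofReal_rpow_rpow hx.le _ hs, ← ENNReal.ofReal_mul (by positivity),
    ← ENNReal.ofReal_mul (by positivity), ← Real.rpow_add hx, add_comm y, div_eq_mul_inv]

theorem Real.HolderConjugate.exists_schur_exponent {p q r : ℝ} (hpq : p.HolderConjugate q)
    (hr₁ : -1 < r) (hr₂ : r < p - 1) :
    ∃ a : ℝ, (-1 < a * q ∧ a * q < 0) ∧ (-1 < r + a * p ∧ r + a * p < 0) := by
  obtain ⟨b, hb₁, hb₂⟩ : ∃ b : ℝ, max (-(p - 1)) (-(r + 1)) < b ∧ b < min 0 (-r) :=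
    exists_between (max_lt (lt_min (by linarith [hpq.sub_one_pos]) (by linarith))
      (lt_min (by linarith) (by linarith)))
  simp only [max_lt_iff, lt_min_iff] at hb₁ hb₂
  have hq : b / p * q = b / (p - 1) := by
    rw [hpq.conjugate_eq]; field_simp [hpq.ne_zero, hpq.sub_one_ne_zero]
  refine ⟨b / p, ⟨?_, ?_⟩, ?_, ?_⟩
  · rw [hq, lt_div_iff₀ hpq.sub_one_pos]; linarith
  · rw [hq]; exact div_neg_of_neg_of_pos hb₂.1 hpq.sub_one_pos
  · rw [div_mul_cancel₀ _ hpq.ne_zero]; linarith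
  · rw [div_mul_cancel₀ _ hpq.ne_zero]; linarith

theorem ofReal_abs_setIntegral_div_add_le (f : ℝ → ℝ) {x : ℝ} (hx : 0 < x) :
    ENNReal.ofReal |∫ y in Ioi 0, f y / (x + y)| ≤
      ∫⁻ y in Ioi 0, ENNReal.ofReal (x + y)⁻¹ * ENNReal.ofReal |f y| := by
  rw [← Real.enorm_eq_ofReal_abs]
  refine (enorm_integral_le_lintegral_enorm _).trans_eq ?_
  refine setLIntegral_congr_fun measurableSet_Ioi fun y (hy : 0 < y) ↦ ?_
  rw [Real.enorm_eq_ofReal_abs, ← ENNReal.ofReal_mul (by positivity), abs_div,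
    abs_of_pos (by positivity : 0 < x + y), inv_mul_eq_div]

theorem lintegral_rpow_lintegral_inv_add_le {p q : ℝ} (hpq : p.HolderConjugate q) (r a : ℝ)
    {F : ℝ → ℝ≥0∞} (hF : Measurable F) :
    ∫⁻ x in Ioi 0, ENNReal.ofReal (x ^ r) * (∫⁻ y in Ioi 0, ENNReal.ofReal (x + y)⁻¹ * F y) ^ p ≤
      stieltjesMoment (a * q) ^ (p / q) * stieltjesMoment (r + a * p) *
        ∫⁻ y in Ioi 0, ENNReal.ofReal (y ^ r) * F y ^ p := by
  refine ENNReal.lintegral_rpow_lintegral_mul_le_of_schur hpq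
    (K := fun x y ↦ ENNReal.ofReal (x + y)⁻¹) (h := fun y ↦ ENNReal.ofReal (y ^ a))
    (g := fun x ↦ ENNReal.ofReal (x ^ a)) (by fun_prop) hF (by fun_prop) (by fun_prop)
    (by fun_prop) (by fun_prop) ?_ (ae_of_all _ fun _ ↦ ENNReal.ofReal_ne_top) ?_ ?_
  · filter_upwards [ae_restrict_mem measurableSet_Ioi] with y (hy : 0 < y)
    exact (ENNReal.ofReal_pos.2 (Real.rpow_pos_of_pos hy a)).ne'
  · filter_upwards [ae_restrict_mem measurableSet_Ioi] with x (hx : 0 < x)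
    exact (lintegral_Ioi_inv_add_mul_rpow hx a hpq.symm.nonneg).le
  · filter_upwards [ae_restrict_mem measurableSet_Ioi] with y (hy : 0 < y)
    exact (lintegral_Ioi_rpow_mul_rpow_mul_inv_add hy r a hpq.nonneg).le

/-- The Hilbert–Stieltjes operator `(Tf)(x) = ∫₀^∞ f(y)/(x+y) dy` is bounded on the
weighted Lebesgue space `L_p((0,∞), x^r dx)` for `1 < p < ∞` and `r ∈ (-1, p-1)`. -/
theorem hilbert_stieltjes_bounded_weighted
    (p r : ℝ) (hp : 1 < p) (hr₁ : -1 < r) (hr₂ : r < p - 1) :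
    ∃ C : ℝ, 0 < C ∧ ∀ f : ℝ → ℝ, Measurable f →
      (∫⁻ x in Ioi (0:ℝ), ENNReal.ofReal (|f x| ^ p * x ^ r)) < ⊤ →
      (∫⁻ x in Ioi (0:ℝ),
          ENNReal.ofReal (|∫ y in Ioi (0:ℝ), f y / (x + y)| ^ p * x ^ r))
        ≤ ENNReal.ofReal (C ^ p) *
            ∫⁻ x in Ioi (0:ℝ), ENNReal.ofReal (|f x| ^ p * x ^ r) := by
  have hpq := Real.HolderConjugate.conjExponent hp
  obtain ⟨a, ⟨haq₁, haq₀⟩, hap₁, hap₀⟩ := hpq.exists_schur_exponent hr₁ hr₂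
  obtain ⟨C, hC, hC_ge⟩ := ENNReal.exists_pos_le_ofReal_rpow (ENNReal.mul_ne_top
    (ENNReal.rpow_ne_top_of_nonneg (div_nonneg hpq.nonneg hpq.symm.nonneg)
      (stieltjesMoment_lt_top haq₁ haq₀).ne) (stieltjesMoment_lt_top hap₁ hap₀).ne) hpq.pos
  refine ⟨C, hC, fun f hf _ ↦ ?_⟩
  calc (∫⁻ x in Ioi (0:ℝ), ENNReal.ofReal (|∫ y in Ioi (0:ℝ), f y / (x + y)| ^ p * x ^ r))
      ≤ ∫⁻ x in Ioi 0, ENNReal.ofReal (x ^ r) *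
          (∫⁻ y in Ioi 0, ENNReal.ofReal (x + y)⁻¹ * ENNReal.ofReal |f y|) ^ p := by
        refine setLIntegral_mono' measurableSet_Ioi fun x (hx : 0 < x) ↦ ?_
        rw [ENNReal.ofReal_mul (by positivity), mul_comm,
          ← ENNReal.ofReal_rpow_of_nonneg (abs_nonneg _) hpq.nonneg]
        gcongr
        exact ofReal_abs_setIntegral_div_add_le f hx
    _ ≤ _ * ∫⁻ y in Ioi 0, ENNReal.ofReal (y ^ r) * ENNReal.ofReal |f y| ^ p :=
        lintegral_rpow_lintegral_inv_add_le hpq r a (by fun_prop)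
    _ ≤ ENNReal.ofReal (C ^ p) * ∫⁻ y in Ioi 0, ENNReal.ofReal (|f y| ^ p * y ^ r) := by
        gcongr with y
        rw [ENNReal.ofReal_rpow_of_nonneg (abs_nonneg _) hpq.nonneg, mul_comm (|f y| ^ p),
          ENNReal.ofReal_mul' (by positivity)]
end

section
/- (Schur test with weights.) Let (X, μ) be a σ-finite measure space, K : X × X → [0,∞) measurable, 1 < p < ∞ with conjugate exponent p′, and suppose there exist measurable functions u, v : X → (0,∞) and a constant C > 0 such that ∫ K(x,y) u(y)^{p′} dμ(y) ≤ C v(x)^{p′} for a.e. x and ∫ K(x,y) v(x)^{p} dμ(x) ≤ C u(y)^{p} for a.e. y. Then the operator (Tf)(x) = ∫ K(x,y) f(y) dμ(y) is bounded on L_p(X, μ) with operator norm at most C. -/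
/-!
Write `W = |f| / u`. For fixed `x`, Hölder's inequality for the measure `K(x, ·) dμ` applied to
`|f| = u · W` bounds `|Tf(x)|^p` by `(∫ K(x,y) u(y)^{p'} dy)^{p/p'} ∫ K(x,y) W(y)^p dy`, and the
first Schur condition turns the first factor into `C^{p/p'} v(x)^p`. Integrating in `x` and
exchanging the order of integration (Tonelli), the second Schur condition gives
`∫ |Tf|^p ≤ C^{p/p'} · C ∫ W^p u^p = C^p ∫ |f|^p`.
-/

open MeasureTheory
open scoped ENNReal

namespace ENNReal

lemma ofReal_mul_rpow_of_pos (a : ℝ) {b : ℝ} (hb : 0 < b) (r : ℝ) :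
    ENNReal.ofReal (a * b ^ r) = ENNReal.ofReal a * ENNReal.ofReal b ^ r := by
  rw [ENNReal.ofReal_mul' (Real.rpow_nonneg hb.le r), ENNReal.ofReal_rpow_of_pos hb]

lemma ofReal_rpow_le (x : ℝ) {p : ℝ} (hp : 0 < p) :
    ENNReal.ofReal x ^ p ≤ ENNReal.ofReal (x ^ p) := by
  rcases le_total 0 x with hx | hx
  · rw [ENNReal.ofReal_rpow_of_nonneg hx hp.le]
  · rw [ENNReal.ofReal_of_nonpos hx, ENNReal.zero_rpow_of_pos hp]
    positivity

end ENNReal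

namespace MeasureTheory

variable {X Y : Type*} [MeasurableSpace X] [MeasurableSpace Y] {p q : ℝ}

lemma lintegral_mul_rpow_le (ν : Measure X) (hpq : p.HolderConjugate q) {f g : X → ℝ≥0∞}
    (hf : AEMeasurable f ν) (hg : AEMeasurable g ν) :
    (∫⁻ y, f y * g y ∂ν) ^ p ≤ (∫⁻ y, f y ^ q ∂ν) ^ (p / q) * ∫⁻ y, g y ^ p ∂ν := by
  calc (∫⁻ y, f y * g y ∂ν) ^ p
      ≤ ((∫⁻ y, f y ^ q ∂ν) ^ (1 / q) * (∫⁻ y, g y ^ p ∂ν) ^ (1 / p)) ^ p :=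
        ENNReal.rpow_le_rpow (ENNReal.lintegral_mul_le_Lp_mul_Lq ν hpq.symm hf hg) hpq.nonneg
    _ = (∫⁻ y, f y ^ q ∂ν) ^ (p / q) * ∫⁻ y, g y ^ p ∂ν := by
        rw [ENNReal.mul_rpow_of_nonneg _ _ hpq.nonneg, ← ENNReal.rpow_mul, ← ENNReal.rpow_mul,
          one_div_mul_cancel hpq.ne_zero, ENNReal.rpow_one, one_div_mul_eq_div]

lemma lintegral_mul_rpow_le_weighted (ν : Measure X) (hpq : p.HolderConjugate q)
    {k F U : X → ℝ≥0∞} (hk : Measurable k) (hF : Measurable F) (hU : Measurable U)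
    (hU₀ : ∀ y, U y ≠ 0) (hU_top : ∀ y, U y ≠ ∞) :
    (∫⁻ y, k y * F y ∂ν) ^ p
      ≤ (∫⁻ y, k y * U y ^ q ∂ν) ^ (p / q) * ∫⁻ y, k y * (F y / U y) ^ p ∂ν := by
  have hsplit : (fun y => k y * F y) = k * (U * (F / U)) := by
    ext y
    simp only [Pi.mul_apply, Pi.div_apply, mul_comm (U y),
      ENNReal.div_mul_cancel (hU₀ y) (hU_top y)]
  have hW : Measurable (F / U) := hF.div hU
  calc (∫⁻ y, k y * F y ∂ν) ^ p
      = (∫⁻ y, U y * (F / U) y ∂ν.withDensity k) ^ p := by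
        rw [hsplit, ← lintegral_withDensity_eq_lintegral_mul ν hk (hU.mul hW)]
        rfl
    _ ≤ (∫⁻ y, U y ^ q ∂ν.withDensity k) ^ (p / q) * ∫⁻ y, (F / U) y ^ p ∂ν.withDensity k :=
        lintegral_mul_rpow_le _ hpq hU.aemeasurable hW.aemeasurable
    _ = (∫⁻ y, k y * U y ^ q ∂ν) ^ (p / q) * ∫⁻ y, k y * (F y / U y) ^ p ∂ν := by
        rw [lintegral_withDensity_eq_lintegral_mul ν hk (hU.pow_const q),
          lintegral_withDensity_eq_lintegral_mul ν hk (hW.pow_const p)]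
        rfl

lemma lintegral_mul_lintegral_kernel_swap (μ : Measure X) (ν : Measure Y) [SFinite μ] [SFinite ν]
    {𝒦 : X → Y → ℝ≥0∞} (h𝒦 : Measurable (Function.uncurry 𝒦)) {f : X → ℝ≥0∞} {g : Y → ℝ≥0∞}
    (hf : Measurable f) (hg : Measurable g) :
    ∫⁻ x, f x * ∫⁻ y, 𝒦 x y * g y ∂ν ∂μ = ∫⁻ y, g y * ∫⁻ x, 𝒦 x y * f x ∂μ ∂ν := by
  have hintegrand : Measurable fun z : X × Y => f z.1 * (𝒦 z.1 z.2 * g z.2) :=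
    (hf.comp measurable_fst).mul (h𝒦.mul (hg.comp measurable_snd))
  calc ∫⁻ x, f x * ∫⁻ y, 𝒦 x y * g y ∂ν ∂μ
      = ∫⁻ x, ∫⁻ y, f x * (𝒦 x y * g y) ∂ν ∂μ :=
        lintegral_congr fun x => (lintegral_const_mul _ (by fun_prop)).symm
    _ = ∫⁻ y, ∫⁻ x, f x * (𝒦 x y * g y) ∂μ ∂ν := lintegral_lintegral_swap hintegrand.aemeasurable
    _ = ∫⁻ y, g y * ∫⁻ x, 𝒦 x y * f x ∂μ ∂ν := by
        refine lintegral_congr fun y => ?_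
        rw [← lintegral_const_mul (g y) (f := fun x => 𝒦 x y * f x) (by fun_prop)]
        exact lintegral_congr fun x => by ring

theorem weighted_schur_test (μ : Measure X) [SFinite μ] (hpq : p.HolderConjugate q)
    {𝒦 : X → X → ℝ≥0∞} (h𝒦 : Measurable (Function.uncurry 𝒦))
    {U V : X → ℝ≥0∞} (hU : Measurable U) (hV : Measurable V)
    (hU₀ : ∀ y, U y ≠ 0) (hU_top : ∀ y, U y ≠ ∞) {c : ℝ≥0∞}
    (h₁ : ∀ᵐ x ∂μ, ∫⁻ y, 𝒦 x y * U y ^ q ∂μ ≤ c * V x ^ q)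
    (h₂ : ∀ᵐ y ∂μ, ∫⁻ x, 𝒦 x y * V x ^ p ∂μ ≤ c * U y ^ p)
    {F : X → ℝ≥0∞} (hF : Measurable F) :
    ∫⁻ x, (∫⁻ y, 𝒦 x y * F y ∂μ) ^ p ∂μ ≤ c ^ p * ∫⁻ y, F y ^ p ∂μ := by
  set W : X → ℝ≥0∞ := fun y => F y / U y
  have hp := hpq.nonneg
  have hpq_div : 0 ≤ p / q := div_nonneg hp hpq.symm.nonneg
  have hW : Measurable W := hF.div hU
  have hfirst : ∀ᵐ x ∂μ, (∫⁻ y, 𝒦 x y * F y ∂μ) ^ p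
      ≤ c ^ (p / q) * (V x ^ p * ∫⁻ y, 𝒦 x y * W y ^ p ∂μ) := by
    filter_upwards [h₁] with x hx
    calc (∫⁻ y, 𝒦 x y * F y ∂μ) ^ p
        ≤ (∫⁻ y, 𝒦 x y * U y ^ q ∂μ) ^ (p / q) * ∫⁻ y, 𝒦 x y * W y ^ p ∂μ :=
          lintegral_mul_rpow_le_weighted μ hpq (h𝒦.comp measurable_prodMk_left) hF hU hU₀ hU_top
      _ ≤ (c * V x ^ q) ^ (p / q) * ∫⁻ y, 𝒦 x y * W y ^ p ∂μ := by gcongr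
      _ = c ^ (p / q) * (V x ^ p * ∫⁻ y, 𝒦 x y * W y ^ p ∂μ) := by
          rw [ENNReal.mul_rpow_of_nonneg _ _ hpq_div, ← ENNReal.rpow_mul,
            mul_div_cancel₀ p hpq.symm.ne_zero, mul_assoc]
  have hsecond : ∫⁻ y, W y ^ p * ∫⁻ x, 𝒦 x y * V x ^ p ∂μ ∂μ ≤ c * ∫⁻ y, F y ^ p ∂μ := by
    calc ∫⁻ y, W y ^ p * ∫⁻ x, 𝒦 x y * V x ^ p ∂μ ∂μ
        ≤ ∫⁻ y, W y ^ p * (c * U y ^ p) ∂μ := by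
          refine lintegral_mono_ae ?_
          filter_upwards [h₂] with y hy
          gcongr
      _ = ∫⁻ y, c * F y ^ p ∂μ := by
          refine lintegral_congr fun y => ?_
          rw [mul_left_comm, ← ENNReal.mul_rpow_of_nonneg _ _ hp,
            ENNReal.div_mul_cancel (hU₀ y) (hU_top y)]
      _ = c * ∫⁻ y, F y ^ p ∂μ := lintegral_const_mul _ (hF.pow_const p)
  have hBmeas : Measurable fun x => V x ^ p * ∫⁻ y, 𝒦 x y * W y ^ p ∂μ :=
    (hV.pow_const p).mul (h𝒦.mul ((hW.pow_const p).comp measurable_snd)).lintegral_prod_right'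
  calc ∫⁻ x, (∫⁻ y, 𝒦 x y * F y ∂μ) ^ p ∂μ
      ≤ ∫⁻ x, c ^ (p / q) * (V x ^ p * ∫⁻ y, 𝒦 x y * W y ^ p ∂μ) ∂μ := lintegral_mono_ae hfirst
    _ = c ^ (p / q) * ∫⁻ y, W y ^ p * ∫⁻ x, 𝒦 x y * V x ^ p ∂μ ∂μ := by
        rw [lintegral_const_mul _ hBmeas,
          lintegral_mul_lintegral_kernel_swap μ μ h𝒦 (hV.pow_const p) (hW.pow_const p)]
    _ ≤ c ^ (p / q) * (c * ∫⁻ y, F y ^ p ∂μ) := by gcongr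
    _ = c ^ p * ∫⁻ y, F y ^ p ∂μ := by
        nth_rw 2 [← ENNReal.rpow_one c]
        rw [← mul_assoc, ← ENNReal.rpow_add_of_nonneg _ _ hpq_div zero_le_one,
          hpq.div_conj_eq_sub_one, sub_add_cancel]

end MeasureTheory

theorem schur_test_weighted_general
    {X : Type*} [MeasurableSpace X] (μ : Measure X) [SigmaFinite μ]
    (p : ℝ) (hp : 1 < p) (K : X → X → ℝ)
    (hKmeas : Measurable (Function.uncurry K))
    (hKpos : ∀ x y, 0 ≤ K x y)
    (u v : X → ℝ) (hu : ∀ x, 0 < u x) (hv : ∀ x, 0 < v x)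
    (humeas : Measurable u) (hvmeas : Measurable v)
    (C : ℝ)
    (hSchur₁ : ∀ᵐ x ∂μ,
      (∫⁻ y, ENNReal.ofReal (K x y * u y ^ (p / (p - 1))) ∂μ)
        ≤ ENNReal.ofReal (C * v x ^ (p / (p - 1))))
    (hSchur₂ : ∀ᵐ y ∂μ,
      (∫⁻ x, ENNReal.ofReal (K x y * v x ^ p) ∂μ)
        ≤ ENNReal.ofReal (C * u y ^ p)) :
    ∀ f : X → ℝ, Measurable f → (∫⁻ x, ENNReal.ofReal (|f x| ^ p) ∂μ) < ⊤ →
      (∫⁻ x, ENNReal.ofReal (|∫ y, K x y * f y ∂μ| ^ p) ∂μ)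
        ≤ ENNReal.ofReal (C ^ p) * ∫⁻ x, ENNReal.ofReal (|f x| ^ p) ∂μ := by
  intro f hf _
  have hpq : p.HolderConjugate (p / (p - 1)) := .conjExponent hp
  have hT : ∀ x, ENNReal.ofReal (|∫ y, K x y * f y ∂μ| ^ p)
      ≤ (∫⁻ y, ENNReal.ofReal (K x y) * ENNReal.ofReal |f y| ∂μ) ^ p := fun x => by
    rw [← ENNReal.ofReal_rpow_of_nonneg (abs_nonneg _) hpq.nonneg, ← Real.enorm_eq_ofReal_abs]
    gcongr
    refine (enorm_integral_le_lintegral_enorm _).trans_eq (lintegral_congr fun y => ?_)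
    rw [Real.enorm_eq_ofReal_abs, abs_mul, abs_of_nonneg (hKpos x y),
      ENNReal.ofReal_mul (hKpos x y)]
  simp only [ENNReal.ofReal_mul_rpow_of_pos _ (hu _), ENNReal.ofReal_mul_rpow_of_pos _ (hv _)]
    at hSchur₁ hSchur₂
  calc ∫⁻ x, ENNReal.ofReal (|∫ y, K x y * f y ∂μ| ^ p) ∂μ
      ≤ ∫⁻ x, (∫⁻ y, ENNReal.ofReal (K x y) * ENNReal.ofReal |f y| ∂μ) ^ p ∂μ := lintegral_mono hT
    _ ≤ ENNReal.ofReal C ^ p * ∫⁻ y, ENNReal.ofReal |f y| ^ p ∂μ :=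
        weighted_schur_test μ hpq (𝒦 := fun x y => ENNReal.ofReal (K x y))
          hKmeas.ennreal_ofReal humeas.ennreal_ofReal hvmeas.ennreal_ofReal
          (fun y => by simp [hu y]) (fun _ => ENNReal.ofReal_ne_top) hSchur₁ hSchur₂
          hf.abs.ennreal_ofReal
    _ ≤ ENNReal.ofReal (C ^ p) * ∫⁻ x, ENNReal.ofReal (|f x| ^ p) ∂μ := by
        gcongr with x
        · exact ENNReal.ofReal_rpow_le C hpq.pos
        · rw [ENNReal.ofReal_rpow_of_nonneg (abs_nonneg _) hpq.nonneg]

/-- Schur test with weights: if `K ≥ 0` and there are positive weights `u, v` with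
`∫ K(x,y) u(y)^{p'} dμ(y) ≤ C v(x)^{p'}` a.e. and `∫ K(x,y) v(x)^p dμ(x) ≤ C u(y)^p` a.e.,
then `f ↦ ∫ K(·,y) f(y) dμ(y)` is bounded on `L_p(X, μ)` with norm at most `C`. -/
theorem schur_test_weighted
    {X : Type*} [MeasurableSpace X] (μ : Measure X) [SigmaFinite μ]
    (p : ℝ) (hp : 1 < p) (K : X → X → ℝ)
    (hKmeas : Measurable (Function.uncurry K))
    (hKpos : ∀ x y, 0 ≤ K x y)
    (u v : X → ℝ) (hu : ∀ x, 0 < u x) (hv : ∀ x, 0 < v x)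
    (humeas : Measurable u) (hvmeas : Measurable v)
    (C : ℝ) (hC : 0 < C)
    (hSchur₁ : ∀ᵐ x ∂μ,
      (∫⁻ y, ENNReal.ofReal (K x y * u y ^ (p / (p - 1))) ∂μ)
        ≤ ENNReal.ofReal (C * v x ^ (p / (p - 1))))
    (hSchur₂ : ∀ᵐ y ∂μ,
      (∫⁻ x, ENNReal.ofReal (K x y * v x ^ p) ∂μ)
        ≤ ENNReal.ofReal (C * u y ^ p)) :
    ∀ f : X → ℝ, Measurable f → (∫⁻ x, ENNReal.ofReal (|f x| ^ p) ∂μ) < ⊤ →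
      (∫⁻ x, ENNReal.ofReal (|∫ y, K x y * f y ∂μ| ^ p) ∂μ)
        ≤ ENNReal.ofReal (C ^ p) * ∫⁻ x, ENNReal.ofReal (|f x| ^ p) ∂μ :=
  schur_test_weighted_general μ p hp K hKmeas hKpos u v hu hv humeas hvmeas C hSchur₁ hSchur₂
end

section
/- Let d ≥ 0 and define m : ℝⁿ × ℂ → ℝ by m(ξ, μ) = ⟨ξ, μ⟩^{d} / (⟨ξ⟩^{d} + ⟨μ⟩^{d}), where ⟨ξ⟩ = (1+|ξ|²)^{1/2}, ⟨μ⟩ = (1+|μ|²)^{1/2}, ⟨ξ,μ⟩ = (1+|ξ|²+|μ|²)^{1/2}. Then m is bounded on ℝⁿ × ℂ, and there is a constant C such that for each j ∈ {1,…,n} and all (ξ, μ), |∂_{ξ_j} m(ξ, μ)| ≤ C ⟨ξ⟩^{−1}. -/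
/-- The symbol `m(ξ,μ) = ⟨ξ,μ⟩^d / (⟨ξ⟩^d + ⟨μ⟩^d)`. -/
noncomputable def mikhlinSymbol (n : ℕ) (d : ℝ) (ξ : EuclideanSpace ℝ (Fin n)) (μ : ℂ) : ℝ :=
  ((1 + ‖ξ‖ ^ 2 + ‖μ‖ ^ 2) ^ ((1:ℝ)/2)) ^ d /
    (((1 + ‖ξ‖ ^ 2) ^ ((1:ℝ)/2)) ^ d + ((1 + ‖μ‖ ^ 2) ^ ((1:ℝ)/2)) ^ d)

private lemma mkey1 {e : ℝ} (he : 0 ≤ e) {B C : ℝ} (hB : 1 ≤ B) (hC : 1 ≤ C) :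
    (B + C - 1) ^ e ≤ 2 ^ e * (B ^ e + C ^ e) := by
  have h0 : (0:ℝ) ≤ B + C - 1 := by linarith
  have hmax : (0:ℝ) ≤ max B C := le_trans (by linarith) (le_max_left B C)
  calc (B + C - 1) ^ e ≤ (2 * max B C) ^ e := by
        apply Real.rpow_le_rpow h0 _ he
        rcases le_total B C with h | h
        · rw [max_eq_right h]; linarith
        · rw [max_eq_left h]; linarith
    _ = 2 ^ e * (max B C) ^ e := Real.mul_rpow (by norm_num) (by positivity)
    _ ≤ 2 ^ e * (B ^ e + C ^ e) := by
        apply mul_le_mul_of_nonneg_left _ (by positivity)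
        rcases max_choice B C with h | h <;> rw [h]
        · nlinarith [Real.rpow_nonneg (by linarith : (0:ℝ) ≤ C) e]
        · nlinarith [Real.rpow_nonneg (by linarith : (0:ℝ) ≤ B) e]

private lemma mkey2 {e : ℝ} (he : 0 ≤ e) {B C : ℝ} (hB : 1 ≤ B) (hC : 1 ≤ C) :
    B * (B + C - 1) ^ (e - 1) ≤ 2 ^ e * (B ^ e + C ^ e) := by
  have hA1 : 1 ≤ B + C - 1 := by linarith
  have hApos : (0:ℝ) < B + C - 1 := by linarith
  have hBA : B ≤ B + C - 1 := by linarith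
  have h2e : (1:ℝ) ≤ 2 ^ e := by
    calc (1:ℝ) = 2 ^ (0:ℝ) := (Real.rpow_zero 2).symm
      _ ≤ 2 ^ e := Real.rpow_le_rpow_of_exponent_le one_le_two he
  rcases le_total 1 e with h | h
  · have h1 : B * (B + C - 1) ^ (e - 1) ≤ (B + C - 1) * (B + C - 1) ^ (e - 1) :=
      mul_le_mul_of_nonneg_right hBA (Real.rpow_nonneg hApos.le _)
    have h2 : (B + C - 1) * (B + C - 1) ^ (e - 1) = (B + C - 1) ^ e := by
      rw [show e = 1 + (e - 1) by ring, Real.rpow_add hApos, Real.rpow_one]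
      ring_nf
    calc B * (B + C - 1) ^ (e - 1) ≤ (B + C - 1) ^ e := by rw [← h2]; exact h1
      _ ≤ 2 ^ e * (B ^ e + C ^ e) := mkey1 he hB hC
  · have h1 : (B + C - 1) ^ (e - 1) ≤ B ^ (e - 1) :=
      Real.rpow_le_rpow_of_nonpos (by linarith) hBA (by linarith)
    have h2 : B * B ^ (e - 1) = B ^ e := by
      rw [show e = 1 + (e - 1) by ring, Real.rpow_add (by linarith : (0:ℝ) < B), Real.rpow_one]
      ring_nf
    have hCe : 0 ≤ C ^ e := Real.rpow_nonneg (by linarith) e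
    have hBe : 0 ≤ B ^ e := Real.rpow_nonneg (by linarith) e
    calc B * (B + C - 1) ^ (e - 1) ≤ B * B ^ (e - 1) :=
          mul_le_mul_of_nonneg_left h1 (by linarith)
      _ = B ^ e := h2
      _ ≤ 2 ^ e * (B ^ e + C ^ e) := by nlinarith

private lemma msymb_eq (n : ℕ) (d : ℝ) (ξ : EuclideanSpace ℝ (Fin n)) (μ : ℂ) :
    mikhlinSymbol n d ξ μ =
      (1 + ‖ξ‖ ^ 2 + ‖μ‖ ^ 2) ^ (d/2) /
        ((1 + ‖ξ‖ ^ 2) ^ (d/2) + (1 + ‖μ‖ ^ 2) ^ (d/2)) := by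
  unfold mikhlinSymbol
  rw [← Real.rpow_mul (by positivity), ← Real.rpow_mul (by positivity),
    ← Real.rpow_mul (by positivity), show (1:ℝ)/2 * d = d/2 by ring]

private lemma hasDerivAt_msymbF (e c : ℝ) (hc : 0 ≤ c) (u : ℝ) (hu : 0 ≤ u) :
    HasDerivAt (fun u : ℝ => (1+u+c) ^ e / ((1+u) ^ e + (1+c) ^ e))
      ((1 * e * (1+u+c) ^ (e-1) * ((1+u) ^ e + (1+c) ^ e)
        - (1+u+c) ^ e * (1 * e * (1+u) ^ (e-1))) / ((1+u) ^ e + (1+c) ^ e) ^ 2) u := by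
  have h1 : HasDerivAt (fun u : ℝ => 1+u+c) 1 u := by
    simpa using (((hasDerivAt_id u).const_add 1).add_const c)
  have hA := h1.rpow_const (p := e) (Or.inl (by positivity))
  have h2 : HasDerivAt (fun u : ℝ => 1+u) 1 u := by
    simpa using ((hasDerivAt_id u).const_add 1)
  have hB := (h2.rpow_const (p := e) (Or.inl (by positivity))).add_const ((1+c) ^ e)
  exact hA.div hB (by positivity)

/-- For `d ≥ 0` the symbol `m(ξ,μ) = ⟨ξ,μ⟩^d / (⟨ξ⟩^d + ⟨μ⟩^d)` is bounded, and its
first-order partial derivatives in `ξ` satisfy `|∂_{ξⱼ} m(ξ,μ)| ≤ C ⟨ξ⟩^{-1}`. -/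
theorem mikhlinSymbol_bounded_and_deriv_bound (n : ℕ) (d : ℝ) (hd : 0 ≤ d) :
    ∃ C : ℝ, 0 < C ∧
      (∀ (ξ : EuclideanSpace ℝ (Fin n)) (μ : ℂ), |mikhlinSymbol n d ξ μ| ≤ C) ∧
      (∀ (j : Fin n) (ξ : EuclideanSpace ℝ (Fin n)) (μ : ℂ),
        |deriv (fun t : ℝ => mikhlinSymbol n d (ξ + t • EuclideanSpace.single j 1) μ) 0|
          ≤ C * ((1 + ‖ξ‖ ^ 2) ^ ((1:ℝ)/2))⁻¹) := by
  set e : ℝ := d / 2 with he_def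
  have he : 0 ≤ e := by positivity
  have h2e : (1:ℝ) ≤ 2 ^ e := by
    calc (1:ℝ) = 2 ^ (0:ℝ) := (Real.rpow_zero 2).symm
      _ ≤ 2 ^ e := Real.rpow_le_rpow_of_exponent_le one_le_two he
  refine ⟨(2 * d + 1) * 2 ^ e, by positivity, ?_, ?_⟩
  · -- boundedness
    intro ξ μ
    rw [msymb_eq]
    set B : ℝ := 1 + ‖ξ‖ ^ 2 with hBdef
    set Cc : ℝ := 1 + ‖μ‖ ^ 2 with hCdef
    have hB : 1 ≤ B := by simp [hBdef]
    have hC : 1 ≤ Cc := by simp [hCdef]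
    have hD : (0:ℝ) < B ^ e + Cc ^ e := by positivity
    have hAeq : (1 + ‖ξ‖ ^ 2 + ‖μ‖ ^ 2) = B + Cc - 1 := by
      rw [hBdef, hCdef]; ring
    rw [abs_of_nonneg (by positivity), hAeq]
    rw [div_le_iff₀ hD]
    calc (B + Cc - 1) ^ e ≤ 2 ^ e * (B ^ e + Cc ^ e) := mkey1 he hB hC
      _ ≤ (2 * d + 1) * 2 ^ e * (B ^ e + Cc ^ e) := by
          nlinarith [mul_nonneg (mul_nonneg (by linarith : (0:ℝ) ≤ 2*d)
            (by positivity : (0:ℝ) ≤ (2:ℝ) ^ e)) hD.le]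
  · -- derivative bound
    intro j ξ μ
    set c : ℝ := ‖μ‖ ^ 2 with hcdef
    have hc : 0 ≤ c := by positivity
    set u0 : ℝ := ‖ξ‖ ^ 2 with hu0def
    have hu0 : 0 ≤ u0 := by positivity
    set a : ℝ := ξ j with hadef
    have hfun : (fun t : ℝ => mikhlinSymbol n d (ξ + t • EuclideanSpace.single j 1) μ)
        = fun t : ℝ => (fun u : ℝ => (1+u+c) ^ e / ((1+u) ^ e + (1+c) ^ e))
            (u0 + 2*a*t + t^2) := by
      funext t
      have hn : ‖ξ + t • EuclideanSpace.single j 1‖ ^ 2 = u0 + 2*a*t + t^2 := by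
        rw [norm_add_sq_real, norm_smul, EuclideanSpace.norm_single]
        have hi : inner ℝ ξ (t • EuclideanSpace.single j 1) = t * a := by
          rw [real_inner_smul_right, EuclideanSpace.inner_single_right]
          simp [hadef]
        rw [hi]
        simp [hu0def]
        ring
      rw [msymb_eq, hn]
    rw [hfun]
    -- derivative of the inner polynomial
    have hu : HasDerivAt (fun t : ℝ => u0 + 2*a*t + t^2) (2*a) 0 := by
      have h1 : HasDerivAt (fun t : ℝ => u0 + 2*a*t + t^2) (0 + 2*a*1 + 2*(0:ℝ)^1) 0 := by
        exact ((hasDerivAt_const 0 u0).add ((hasDerivAt_id 0).const_mul (2*a))).add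
          (hasDerivAt_pow 2 0)
      simpa using h1
    have hF := hasDerivAt_msymbF e c hc u0 hu0
    have hF' : HasDerivAt (fun u : ℝ => (1+u+c) ^ e / ((1+u) ^ e + (1+c) ^ e))
        ((1 * e * (1+u0+c) ^ (e-1) * ((1+u0) ^ e + (1+c) ^ e)
          - (1+u0+c) ^ e * (1 * e * (1+u0) ^ (e-1))) / ((1+u0) ^ e + (1+c) ^ e) ^ 2)
        ((fun t : ℝ => u0 + 2*a*t + t^2) 0) := by
      convert hF using 2 <;> norm_num
    have hcomp : HasDerivAt (fun t : ℝ => (fun u : ℝ => (1+u+c) ^ e / ((1+u) ^ e + (1+c) ^ e))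
        (u0 + 2*a*t + t^2))
        (((1 * e * (1+u0+c) ^ (e-1) * ((1+u0) ^ e + (1+c) ^ e)
          - (1+u0+c) ^ e * (1 * e * (1+u0) ^ (e-1))) / ((1+u0) ^ e + (1+c) ^ e) ^ 2) * (2*a))
        0 := by have := hF'.comp 0 hu; exact this
    rw [hcomp.deriv]
    simp only [one_mul]
    set B : ℝ := 1 + u0 with hBdef
    set Cc : ℝ := 1 + c with hCcdef
    have hB : 1 ≤ B := by rw [hBdef]; linarith
    have hC : 1 ≤ Cc := by rw [hCcdef]; linarith
    have hBpos : (0:ℝ) < B := by linarith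
    have hApos : (0:ℝ) < B + c := by linarith
    set D : ℝ := B ^ e + Cc ^ e with hDdef
    have hBe : 0 ≤ B ^ e := Real.rpow_nonneg hBpos.le e
    have hCce : 0 ≤ Cc ^ e := Real.rpow_nonneg (by linarith) e
    have hD : (0:ℝ) < D := by
      rw [hDdef]
      have : (0:ℝ) < B ^ e := Real.rpow_pos_of_pos hBpos e
      linarith
    set s : ℝ := B ^ ((1:ℝ)/2) with hsdef
    have hs : 0 < s := Real.rpow_pos_of_pos hBpos _
    have hss : s * s = B := by
      rw [hsdef, ← Real.rpow_add hBpos]; norm_num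
    have hAe1 : 0 ≤ (B + c) ^ (e - 1) := Real.rpow_nonneg hApos.le _
    have hAe : 0 ≤ (B + c) ^ e := Real.rpow_nonneg hApos.le _
    have hBe1 : 0 ≤ B ^ (e - 1) := Real.rpow_nonneg hBpos.le _
    have ha : |a| ≤ s := by
      have h1 : |a| ≤ ‖ξ‖ := by
        have h := abs_real_inner_le_norm ξ (EuclideanSpace.single j (1:ℝ))
        rw [EuclideanSpace.inner_single_right, EuclideanSpace.norm_single] at h
        simpa [hadef] using h
      have h2 : ‖ξ‖ ≤ s := by
        rw [hsdef, hBdef]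
        calc ‖ξ‖ = (‖ξ‖ ^ 2) ^ ((1:ℝ)/2) := by
              rw [← Real.rpow_natCast ‖ξ‖ 2, ← Real.rpow_mul (norm_nonneg ξ)]
              norm_num
          _ ≤ (1 + u0) ^ ((1:ℝ)/2) := by
              apply Real.rpow_le_rpow (by positivity) _ (by norm_num)
              rw [← hu0def]; linarith
      exact h1.trans h2
    -- bound the numerator
    have hNum : |e * (B + c) ^ (e-1) * D - (B + c) ^ e * (e * B ^ (e-1))|
        ≤ e * (B + c) ^ (e-1) * D + (B + c) ^ e * (e * B ^ (e-1)) := by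
      refine (abs_sub _ _).trans (le_of_eq ?_)
      rw [abs_of_nonneg, abs_of_nonneg]
      · exact mul_nonneg hAe (mul_nonneg he hBe1)
      · exact mul_nonneg (mul_nonneg he hAe1) hD.le
    set N : ℝ := e * (B + c) ^ (e-1) * D + (B + c) ^ e * (e * B ^ (e-1)) with hNdef
    have hN : 0 ≤ N := by
      rw [hNdef]
      have := mul_nonneg (mul_nonneg he hAe1) hD.le
      have := mul_nonneg hAe (mul_nonneg he hBe1)
      linarith
    have habs : |(e * (B + c) ^ (e-1) * D - (B + c) ^ e * (e * B ^ (e-1))) / D ^ 2 * (2*a)|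
        ≤ N / D ^ 2 * (2 * s) := by
      rw [abs_mul, abs_div, abs_of_nonneg (by positivity : (0:ℝ) ≤ D ^ 2), abs_mul, abs_two]
      gcongr
    refine habs.trans ?_
    -- the key algebraic bound
    have hACc : B + Cc - 1 = B + c := by rw [hCcdef]; ring
    have t1 : B * (B + c) ^ (e - 1) ≤ 2 ^ e * D := by
      have h := mkey2 he hB hC
      rw [hACc] at h
      rw [hDdef]; exact h
    have t2 : (B + c) ^ e ≤ 2 ^ e * D := by
      have h := mkey1 he hB hC
      rw [hACc] at h
      rw [hDdef]; exact h
    have t3 : B * B ^ (e - 1) = B ^ e := by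
      rw [show e = 1 + (e - 1) by ring, Real.rpow_add hBpos, Real.rpow_one]
      ring_nf
    have t4 : B ^ e ≤ D := by rw [hDdef]; linarith
    have h2epos : (0:ℝ) < 2 ^ e := Real.rpow_pos_of_pos (by norm_num) e
    have key : 2 * N * B ≤ (2 * d + 1) * 2 ^ e * D ^ 2 := by
      have lA : (B * (B + c) ^ (e-1)) * D ≤ (2 ^ e * D) * D :=
        mul_le_mul_of_nonneg_right t1 hD.le
      have lB : (B + c) ^ e * (B * B ^ (e-1)) ≤ (2 ^ e * D) * D := by
        rw [t3]
        exact mul_le_mul t2 t4 hBe (by positivity)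
      have he2 : (0:ℝ) ≤ 2 * e := by linarith
      have m1 := mul_le_mul_of_nonneg_left lA he2
      have m2 := mul_le_mul_of_nonneg_left lB he2
      calc 2 * N * B
          = 2 * e * ((B * (B + c) ^ (e-1)) * D)
            + 2 * e * ((B + c) ^ e * (B * B ^ (e-1))) := by rw [hNdef]; ring
        _ ≤ 2 * e * ((2 ^ e * D) * D) + 2 * e * ((2 ^ e * D) * D) := by linarith
        _ = (2 * d) * (2 ^ e * D ^ 2) := by rw [he_def]; ring
        _ ≤ (2 * d + 1) * 2 ^ e * D ^ 2 := by
            linarith [mul_nonneg h2epos.le (sq_nonneg D)]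
    -- finish
    rw [show (2 * d + 1) * 2 ^ e * s⁻¹ = ((2 * d + 1) * 2 ^ e) / s from by
      rw [div_eq_mul_inv]]
    rw [div_mul_eq_mul_div, div_le_div_iff₀ (by positivity) hs]
    calc N * (2 * s) * s = 2 * N * (s * s) := by ring
      _ = 2 * N * B := by rw [hss]
      _ ≤ (2 * d + 1) * 2 ^ e * D ^ 2 := key
end

section
/- Let p ∈ (1, ∞), l ∈ ℕ, and r ∈ (−1, p−1). Then there is a constant C > 0 such that for every smooth compactly supported function φ on (0, ∞), ∫₀^∞ |φ(x)|^p x^{r − lp} dx ≤ C Σ_{j=0}^{l} ∫₀^∞ |φ^{(j)}(x)|^p x^{r} dx; i.e., the weighted Sobolev space W^l_{p,0}((0,∞), x^r dx) embeds continuously into L_p((0,∞), x^{r−lp} dx). -/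
open Set MeasureTheory ENNReal

lemma lint_rpow_Ioc {c x : ℝ} (hc : -1 < c) (hx : 0 < x) :
    ∫⁻ t in Ioc (0:ℝ) x, ENNReal.ofReal (t ^ c) = ENNReal.ofReal (x ^ (c+1) / (c+1)) := by
  have hint : IntegrableOn (fun t : ℝ => t ^ c) (Ioc 0 x) := by
    have := intervalIntegral.intervalIntegrable_rpow' (a := 0) (b := x) (r := c) hc
    rwa [intervalIntegrable_iff_integrableOn_Ioc_of_le hx.le] at this
  rw [← ofReal_integral_eq_lintegral_ofReal hint ?nn]
  · congr 1
    have h1 : ∫ t in (0:ℝ)..x, t ^ c = (x ^ (c+1) - 0 ^ (c+1)) / (c+1) :=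
      integral_rpow (Or.inl hc)
    rw [intervalIntegral.integral_of_le hx.le] at h1
    rw [h1, Real.zero_rpow (by linarith), sub_zero]
  case nn =>
    filter_upwards [ae_restrict_mem measurableSet_Ioc] with t ht
    exact Real.rpow_nonneg ht.1.le c

lemma lint_rpow_Ioi {b t : ℝ} (hb : b < -1) (ht : 0 < t) :
    ∫⁻ x in Ioi t, ENNReal.ofReal (x ^ b) = ENNReal.ofReal (-t ^ (b+1) / (b+1)) := by
  rw [← ofReal_integral_eq_lintegral_ofReal (integrableOn_Ioi_rpow_of_lt hb ht) ?_,
    integral_Ioi_rpow_of_lt hb ht]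
  filter_upwards [ae_restrict_mem measurableSet_Ioi] with x hx
  exact Real.rpow_nonneg (ht.trans hx).le b

lemma hardy_lintegral {p s : ℝ} (hp : 1 < p) (hs : s < -1) :
    ∃ C : ℝ≥0∞, C ≠ 0 ∧ C ≠ ⊤ ∧ ∀ f : ℝ → ℝ≥0∞, Measurable f →
    ∫⁻ x in Ioi (0:ℝ), (∫⁻ t in Ioc (0:ℝ) x, f t) ^ p * ENNReal.ofReal (x ^ s)
      ≤ C * ∫⁻ t in Ioi (0:ℝ), (f t) ^ p * ENNReal.ofReal (t ^ (s + p)) := by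
  have hp0 : (0:ℝ) < p := lt_trans one_pos hp
  have hp1 : (0:ℝ) < p - 1 := by linarith
  set q : ℝ := p / (p - 1) with hq_def
  have hpq : p.HolderConjugate q := Real.HolderConjugate.conjExponent hp
  have hq0 : 0 < q := hpq.symm.pos
  set a : ℝ := (s + 2*p - 1) / (2*p) with ha_def
  have haq : a * q = (s + 2*p - 1) / (2*(p-1)) := by
    rw [ha_def, hq_def]; field_simp
  have haq1 : a * q < 1 := by
    rw [haq, div_lt_one (by linarith)]; linarith
  set u : ℝ := 1 - a * q with hu_def
  have hu : 0 < u := by simp only [hu_def]; linarith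
  set b : ℝ := s + u * (p - 1) with hb_def
  have hb : b = (s - 1) / 2 := by
    rw [hb_def, hu_def, haq]; field_simp; ring
  have hb1 : b < -1 := by rw [hb]; linarith
  have hkey : a * p + b + 1 = s + p := by
    rw [hb, ha_def]; field_simp; ring
  set k₁ : ℝ := u ^ (p - 1) with hk₁_def
  have hk₁ : 0 < k₁ := Real.rpow_pos_of_pos hu _
  set k₂ : ℝ := -1 / (b + 1) with hk₂_def
  have hk₂ : 0 < k₂ := div_pos_of_neg_of_neg (by norm_num) (by linarith)
  refine ⟨ENNReal.ofReal (k₂ / k₁), ?_, ofReal_ne_top, ?_⟩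
  · simp only [ne_eq, ENNReal.ofReal_eq_zero, not_le]
    exact div_pos hk₂ hk₁
  intro f hf
  set g : ℝ → ℝ≥0∞ := fun t => f t ^ p * ENNReal.ofReal (t ^ (a*p)) with hg_def
  have hg : Measurable g :=
    (hf.pow_const p).mul ((measurable_id'.pow_const (a*p)).ennreal_ofReal)
  set S : Set (ℝ × ℝ) := {z | z.2 ∈ Ioc 0 z.1} with hS_def
  have hS : MeasurableSet S := by
    have : S = {z : ℝ × ℝ | 0 < z.2} ∩ {z : ℝ × ℝ | z.2 ≤ z.1} := rfl
    rw [this]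
    exact (measurableSet_lt measurable_const measurable_snd).inter
      (measurableSet_le measurable_snd measurable_fst)
  set H : ℝ × ℝ → ℝ≥0∞ := S.indicator (fun z => g z.2) with hH_def
  have hH : Measurable H := (hg.comp measurable_snd).indicator hS
  have hHeq : ∀ x t : ℝ, H (x, t) = (Ioc 0 x).indicator g t := by
    intro x t
    by_cases h : t ∈ Ioc 0 x
    · rw [indicator_of_mem h, hH_def, indicator_of_mem (by exact h)]
    · rw [indicator_of_notMem h, hH_def, indicator_of_notMem (by exact h)]
  set A : ℝ → ℝ≥0∞ := fun x => ∫⁻ t in Ioc (0:ℝ) x, g t with hA_def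
  have hA_eq : ∀ x, A x = ∫⁻ t, H (x, t) := by
    intro x
    show ∫⁻ t in Ioc (0:ℝ) x, g t = ∫⁻ t, H (x, t)
    rw [← lintegral_indicator measurableSet_Ioc]
    exact lintegral_congr fun t => (hHeq x t).symm
  have hA : Measurable A := by
    have hAe : A = fun x => ∫⁻ t, H (x, t) := funext hA_eq
    rw [hAe]
    exact Measurable.lintegral_prod_right (f := fun x t : ℝ => H (x, t)) hH
  -- Step 1 : pointwise Hölder bound
  have step1 : ∀ x ∈ Ioi (0:ℝ), (∫⁻ t in Ioc (0:ℝ) x, f t) ^ p * ENNReal.ofReal (x ^ s)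
      ≤ ENNReal.ofReal (1/k₁) * (A x * ENNReal.ofReal (x ^ b)) := by
    intro x hx
    have hx0 : (0:ℝ) < x := hx
    have hcong : ∫⁻ t in Ioc (0:ℝ) x, f t
        = ∫⁻ t in Ioc (0:ℝ) x,
            ((fun t => f t * ENNReal.ofReal (t ^ a)) * fun t => ENNReal.ofReal (t ^ (-a))) t := by
      refine setLIntegral_congr_fun_ae measurableSet_Ioc (ae_of_all _ fun t ht => ?_)
      simp only [Pi.mul_apply]
      rw [mul_assoc, ← ENNReal.ofReal_mul (Real.rpow_nonneg ht.1.le _),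
        ← Real.rpow_add ht.1, add_neg_cancel, Real.rpow_zero, ENNReal.ofReal_one, mul_one]
    have holder := ENNReal.lintegral_mul_le_Lp_mul_Lq (volume.restrict (Ioc (0:ℝ) x)) hpq
      (f := fun t => f t * ENNReal.ofReal (t ^ a)) (g := fun t => ENNReal.ofReal (t ^ (-a)))
      ((hf.mul ((measurable_id'.pow_const a).ennreal_ofReal)).aemeasurable)
      (((measurable_id'.pow_const (-a)).ennreal_ofReal).aemeasurable)
    rw [← hcong] at holder
    have h1 : ∫⁻ t in Ioc (0:ℝ) x, (f t * ENNReal.ofReal (t ^ a)) ^ p = A x := by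
      refine setLIntegral_congr_fun_ae measurableSet_Ioc (ae_of_all _ fun t ht => ?_)
      rw [ENNReal.mul_rpow_of_nonneg _ _ hp0.le,
        ENNReal.ofReal_rpow_of_nonneg (Real.rpow_nonneg ht.1.le a) hp0.le,
        ← Real.rpow_mul ht.1.le]
    have h2 : ∫⁻ t in Ioc (0:ℝ) x, (ENNReal.ofReal (t ^ (-a))) ^ q
        = ENNReal.ofReal (x ^ u / u) := by
      have e1 : ∫⁻ t in Ioc (0:ℝ) x, (ENNReal.ofReal (t ^ (-a))) ^ q
          = ∫⁻ t in Ioc (0:ℝ) x, ENNReal.ofReal (t ^ (-a * q)) := by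
        refine setLIntegral_congr_fun_ae measurableSet_Ioc (ae_of_all _ fun t ht => ?_)
        rw [ENNReal.ofReal_rpow_of_nonneg (Real.rpow_nonneg ht.1.le _) hq0.le,
          ← Real.rpow_mul ht.1.le]
      rw [e1, lint_rpow_Ioc (by simp only [neg_mul]; linarith) hx0,
        show -a * q + 1 = u by simp only [hu_def]; ring]
    rw [h1, h2] at holder
    have key := ENNReal.rpow_le_rpow holder hp0.le
    have expand : (A x ^ (1/p) * ENNReal.ofReal (x ^ u / u) ^ (1/q)) ^ p
        = A x * ENNReal.ofReal (x ^ (u*(p-1)) / k₁) := by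
      rw [ENNReal.mul_rpow_of_nonneg _ _ hp0.le, ← ENNReal.rpow_mul, ← ENNReal.rpow_mul,
        one_div, inv_mul_cancel₀ hp0.ne', ENNReal.rpow_one,
        show 1/q * p = p - 1 by rw [hq_def]; field_simp,
        ENNReal.ofReal_rpow_of_nonneg (div_nonneg (Real.rpow_nonneg hx0.le u) hu.le) hp1.le,
        Real.div_rpow (Real.rpow_nonneg hx0.le u) hu.le, ← Real.rpow_mul hx0.le, ← hk₁_def]
    rw [expand] at key
    calc (∫⁻ t in Ioc (0:ℝ) x, f t) ^ p * ENNReal.ofReal (x ^ s)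
        ≤ (A x * ENNReal.ofReal (x ^ (u*(p-1)) / k₁)) * ENNReal.ofReal (x ^ s) :=
          mul_le_mul_left key _
      _ = ENNReal.ofReal (1/k₁) * (A x * ENNReal.ofReal (x ^ b)) := by
          rw [mul_assoc, ← ENNReal.ofReal_mul (div_nonneg (Real.rpow_nonneg hx0.le _) hk₁.le),
            show x ^ (u*(p-1)) / k₁ * x ^ s = 1/k₁ * x ^ b by
              rw [hb_def, Real.rpow_add hx0]; ring,
            ENNReal.ofReal_mul (by positivity), mul_comm (A x), mul_assoc]
          ring
  -- Step 2 : integrate the bound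
  have step2 : ∫⁻ x in Ioi (0:ℝ), (∫⁻ t in Ioc (0:ℝ) x, f t) ^ p * ENNReal.ofReal (x ^ s)
      ≤ ENNReal.ofReal (1/k₁) * ∫⁻ x in Ioi (0:ℝ), A x * ENNReal.ofReal (x ^ b) := by
    rw [← lintegral_const_mul _ (f := fun x => A x * ENNReal.ofReal (x ^ b)) (hA.mul ((measurable_id'.pow_const b).ennreal_ofReal))]
    exact setLIntegral_mono
      (measurable_const.mul (hA.mul ((measurable_id'.pow_const b).ennreal_ofReal))) step1
  -- Step 3 : Fubini
  have step3 : ∫⁻ x in Ioi (0:ℝ), A x * ENNReal.ofReal (x ^ b)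
      = ∫⁻ t in Ioi (0:ℝ), g t * ENNReal.ofReal (t ^ (b+1) * k₂) := by
    have e1 : ∫⁻ x in Ioi (0:ℝ), A x * ENNReal.ofReal (x ^ b)
        = ∫⁻ x in Ioi (0:ℝ), ∫⁻ t, ENNReal.ofReal (x ^ b) * H (x, t) := by
      refine lintegral_congr fun x => ?_
      rw [hA_eq, mul_comm,
        lintegral_const_mul _ (show Measurable fun t => H (x, t) from
          hH.comp measurable_prodMk_left)]
    have hmeas : Measurable fun z : ℝ × ℝ => ENNReal.ofReal (z.1 ^ b) * H z :=
      ((measurable_fst.pow_const b).ennreal_ofReal).mul hH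
    have swap : ∫⁻ x in Ioi (0:ℝ), ∫⁻ t, ENNReal.ofReal (x ^ b) * H (x, t)
        = ∫⁻ t, ∫⁻ x in Ioi (0:ℝ), ENNReal.ofReal (x ^ b) * H (x, t) :=
      lintegral_lintegral_swap hmeas.aemeasurable
    have inner : ∀ t : ℝ, (∫⁻ x in Ioi (0:ℝ), ENNReal.ofReal (x ^ b) * H (x, t))
        = (Ioi (0:ℝ)).indicator (fun t => g t * ENNReal.ofReal (t ^ (b+1) * k₂)) t := by
      intro t
      by_cases ht : 0 < t
      · have e2 : ∀ x : ℝ, ENNReal.ofReal (x ^ b) * H (x, t)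
            = (Ici t).indicator (fun x => ENNReal.ofReal (x ^ b) * g t) x := by
          intro x
          rw [hHeq]
          by_cases hxt : t ≤ x
          · rw [Set.indicator_of_mem (show x ∈ Ici t from hxt),
              Set.indicator_of_mem (show t ∈ Ioc 0 x from ⟨ht, hxt⟩)]
          · rw [Set.indicator_of_notMem (show x ∉ Ici t from hxt),
              Set.indicator_of_notMem (show t ∉ Ioc 0 x from fun h => hxt h.2), mul_zero]
        have hIci : Ici t ∩ Ioi (0:ℝ) = Ici t :=
          inter_eq_left.mpr fun x hx => lt_of_lt_of_le ht (mem_Ici.mp hx)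
        rw [lintegral_congr fun x => e2 x, lintegral_indicator measurableSet_Ici,
          Measure.restrict_restrict measurableSet_Ici, hIci,
          ← Measure.restrict_congr_set Ioi_ae_eq_Ici,
          lintegral_mul_const _ (measurable_id'.pow_const b).ennreal_ofReal,
          lint_rpow_Ioi hb1 ht, Set.indicator_of_mem (show t ∈ Ioi (0:ℝ) from ht),
          show -t ^ (b+1) / (b+1) = t ^ (b+1) * k₂ by rw [hk₂_def]; ring]
        exact mul_comm _ _
      · have e2 : ∀ x : ℝ, ENNReal.ofReal (x ^ b) * H (x, t) = 0 := by
          intro x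
          rw [hHeq, Set.indicator_of_notMem (show t ∉ Ioc 0 x from fun h => ht h.1), mul_zero]
        rw [lintegral_congr fun x => e2 x, lintegral_zero,
          Set.indicator_of_notMem (show t ∉ Ioi (0:ℝ) from fun h => ht (mem_Ioi.mp h))]
    rw [e1, swap, lintegral_congr inner, lintegral_indicator measurableSet_Ioi]
  -- Step 4 : final identification
  have step4 : ENNReal.ofReal (1/k₁) * ∫⁻ t in Ioi (0:ℝ), g t * ENNReal.ofReal (t ^ (b+1) * k₂)
      = ENNReal.ofReal (k₂/k₁) * ∫⁻ t in Ioi (0:ℝ), f t ^ p * ENNReal.ofReal (t ^ (s + p)) := by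
    rw [← lintegral_const_mul _ (f := fun t => g t * ENNReal.ofReal (t ^ (b+1) * k₂))
        (hg.mul (((measurable_id'.pow_const (b+1)).mul_const k₂).ennreal_ofReal)),
      ← lintegral_const_mul _ (f := fun t => f t ^ p * ENNReal.ofReal (t ^ (s + p)))
        ((hf.pow_const p).mul ((measurable_id'.pow_const (s+p)).ennreal_ofReal))]
    refine setLIntegral_congr_fun_ae measurableSet_Ioi (ae_of_all _ fun t ht => ?_)
    have ht0 : (0:ℝ) < t := ht
    have e2 : ENNReal.ofReal (t ^ (a*p)) * ENNReal.ofReal (t ^ (b+1) * k₂)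
        = ENNReal.ofReal (t ^ (s+p)) * ENNReal.ofReal k₂ := by
      rw [← ENNReal.ofReal_mul (Real.rpow_nonneg ht0.le _),
        ← ENNReal.ofReal_mul (Real.rpow_nonneg ht0.le _), ← mul_assoc,
        ← Real.rpow_add ht0, show a*p + (b+1) = s + p by linarith [hkey]]
    have e3 : ENNReal.ofReal (1/k₁) * ENNReal.ofReal k₂ = ENNReal.ofReal (k₂ / k₁) := by
      rw [← ENNReal.ofReal_mul (by positivity : (0:ℝ) ≤ 1/k₁), one_div, inv_mul_eq_div]
    simp only [hg_def]
    rw [mul_assoc (f t ^ p), e2, ← e3]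
    ring
  calc ∫⁻ x in Ioi (0:ℝ), (∫⁻ t in Ioc (0:ℝ) x, f t) ^ p * ENNReal.ofReal (x ^ s)
      ≤ ENNReal.ofReal (1/k₁) * ∫⁻ x in Ioi (0:ℝ), A x * ENNReal.ofReal (x ^ b) := step2
    _ = ENNReal.ofReal (1/k₁)
        * ∫⁻ t in Ioi (0:ℝ), g t * ENNReal.ofReal (t ^ (b+1) * k₂) := by rw [step3]
    _ = ENNReal.ofReal (k₂/k₁) * ∫⁻ t in Ioi (0:ℝ), f t ^ p * ENNReal.ofReal (t ^ (s + p)) :=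
        step4

lemma measurable_ofReal_abs {ψ : ℝ → ℝ} (hψ : Continuous ψ) :
    Measurable fun t => ENNReal.ofReal |ψ t| :=
  (hψ.abs.measurable).ennreal_ofReal

lemma hardy_step {p s : ℝ} (hp : 1 < p) (hs : s < -1) :
    ∃ C : ℝ≥0∞, C ≠ 0 ∧ C ≠ ⊤ ∧ ∀ φ : ℝ → ℝ, ContDiff ℝ ((⊤ : ℕ∞) : WithTop ℕ∞) φ → HasCompactSupport φ →
      tsupport φ ⊆ Ioi 0 →
    ∫⁻ x in Ioi (0:ℝ), ENNReal.ofReal |φ x| ^ p * ENNReal.ofReal (x ^ s)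
      ≤ C * ∫⁻ x in Ioi (0:ℝ), ENNReal.ofReal |deriv φ x| ^ p
          * ENNReal.ofReal (x ^ (s + p)) := by
  have hp0 : (0:ℝ) < p := lt_trans one_pos hp
  obtain ⟨C, hC0, hCtop, hC⟩ := hardy_lintegral hp hs
  refine ⟨C, hC0, hCtop, fun φ hφ hcs hsup => ?_⟩
  have h1e : (1 : WithTop ℕ∞) ≤ ((⊤ : ℕ∞) : WithTop ℕ∞) := by exact_mod_cast le_top
  have hd : Continuous (deriv φ) := hφ.continuous_deriv h1e
  have hf : Measurable fun t => ENNReal.ofReal |deriv φ t| := measurable_ofReal_abs hd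
  have hφ0 : φ 0 = 0 :=
    image_eq_zero_of_notMem_tsupport (fun h => lt_irrefl (0:ℝ) (hsup h))
  have ptw : ∀ x ∈ Ioi (0:ℝ),
      ENNReal.ofReal |φ x| ≤ ∫⁻ t in Ioc (0:ℝ) x, ENNReal.ofReal |deriv φ t| := by
    intro x hx
    have hx0 : (0:ℝ) < x := hx
    have hFTC : φ x = ∫ t in Ioc (0:ℝ) x, deriv φ t := by
      have := intervalIntegral.integral_deriv_eq_sub
        (f := φ) (a := 0) (b := x)
        (fun y _ => (hφ.differentiable (by simp)).differentiableAt)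
        (hd.intervalIntegrable 0 x)
      rw [intervalIntegral.integral_of_le hx0.le] at this
      rw [this, hφ0, sub_zero]
    have hint : IntegrableOn (deriv φ) (Ioc (0:ℝ) x) := hd.integrableOn_Ioc
    calc ENNReal.ofReal |φ x|
        ≤ ENNReal.ofReal (∫ t in Ioc (0:ℝ) x, |deriv φ t|) := by
          rw [hFTC]
          exact ENNReal.ofReal_le_ofReal
            (by
              have := norm_integral_le_integral_norm (μ := volume.restrict (Ioc (0:ℝ) x))
                (f := deriv φ)
              simpa [Real.norm_eq_abs] using this)
      _ = ∫⁻ t in Ioc (0:ℝ) x, ENNReal.ofReal |deriv φ t| :=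
          ofReal_integral_eq_lintegral_ofReal hint.abs
            (ae_of_all _ fun t => abs_nonneg _)
  refine le_trans (setLIntegral_mono_ae' measurableSet_Ioi (ae_of_all _ fun x hx => ?_))
    (hC _ hf)
  exact mul_le_mul_left (ENNReal.rpow_le_rpow (ptw x hx) hp0.le) _

lemma tsupport_iteratedDeriv_subset (f : ℝ → ℝ) (n : ℕ) :
    tsupport (iteratedDeriv n f) ⊆ tsupport f := by
  induction n with
  | zero => rw [iteratedDeriv_zero]
  | succ n ih =>
    rw [iteratedDeriv_succ]
    exact (closure_minimal support_deriv_subset (isClosed_tsupport _)).trans ih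

lemma hardy_iter {p r : ℝ} (hp : 1 < p) (hr₂ : r < p - 1) (n : ℕ) :
    ∃ C : ℝ≥0∞, C ≠ 0 ∧ C ≠ ⊤ ∧ ∀ φ : ℝ → ℝ, ContDiff ℝ ((⊤ : ℕ∞) : WithTop ℕ∞) φ → HasCompactSupport φ →
      tsupport φ ⊆ Ioi 0 →
      ∫⁻ x in Ioi (0:ℝ), ENNReal.ofReal |φ x| ^ p * ENNReal.ofReal (x ^ (r - n * p))
        ≤ C * ∫⁻ x in Ioi (0:ℝ), ENNReal.ofReal |iteratedDeriv n φ x| ^ p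
            * ENNReal.ofReal (x ^ r) := by
  have hp0 : (0:ℝ) < p := lt_trans one_pos hp
  induction n with
  | zero =>
    refine ⟨1, one_ne_zero, ENNReal.one_ne_top, fun φ _ _ _ => ?_⟩
    simp [iteratedDeriv_zero]
  | succ n ih =>
    obtain ⟨C₁, hC₁0, hC₁top, h1⟩ := ih
    have hs : r - ((n+1 : ℕ) : ℝ) * p < -1 := by
      have : ((n+1 : ℕ) : ℝ) * p ≥ p := by
        have : (1:ℝ) ≤ ((n+1 : ℕ) : ℝ) := by exact_mod_cast Nat.one_le_iff_ne_zero.mpr (Nat.succ_ne_zero n)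
        nlinarith
      linarith
    obtain ⟨C₂, hC₂0, hC₂top, h2⟩ := hardy_step hp hs
    refine ⟨C₂ * C₁, mul_ne_zero hC₂0 hC₁0, ENNReal.mul_ne_top hC₂top hC₁top,
      fun φ hφ hcs hsup => ?_⟩
    have hφ' : ContDiff ℝ ((⊤ : ℕ∞) : WithTop ℕ∞) (deriv φ) := (contDiff_infty_iff_deriv.mp hφ).2
    have hcs' : HasCompactSupport (deriv φ) := hcs.deriv
    have hsup' : tsupport (deriv φ) ⊆ Ioi 0 :=
      (closure_minimal support_deriv_subset (isClosed_tsupport φ)).trans hsup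
    have step := h2 φ hφ hcs hsup
    have hexp : r - ((n+1 : ℕ) : ℝ) * p + p = r - (n : ℕ) * p := by push_cast; ring
    rw [hexp] at step
    have iter := h1 (deriv φ) hφ' hcs' hsup'
    calc ∫⁻ x in Ioi (0:ℝ), ENNReal.ofReal |φ x| ^ p
          * ENNReal.ofReal (x ^ (r - ((n+1 : ℕ) : ℝ) * p))
        ≤ C₂ * ∫⁻ x in Ioi (0:ℝ), ENNReal.ofReal |deriv φ x| ^ p
            * ENNReal.ofReal (x ^ (r - (n : ℕ) * p)) := step
      _ ≤ C₂ * (C₁ * ∫⁻ x in Ioi (0:ℝ), ENNReal.ofReal |iteratedDeriv n (deriv φ) x| ^ p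
            * ENNReal.ofReal (x ^ r)) := mul_le_mul_right iter _
      _ = (C₂ * C₁) * ∫⁻ x in Ioi (0:ℝ), ENNReal.ofReal |iteratedDeriv (n+1) φ x| ^ p
            * ENNReal.ofReal (x ^ r) := by
          rw [← iteratedDeriv_succ', mul_assoc]

lemma lint_finite {p r : ℝ} (hp : 0 < p) (ψ : ℝ → ℝ) (hc : Continuous ψ)
    (hcs : HasCompactSupport ψ) (hsup : tsupport ψ ⊆ Ioi 0) :
    ∫⁻ x in Ioi (0:ℝ), ENNReal.ofReal |ψ x| ^ p * ENNReal.ofReal (x ^ r) ≠ ⊤ := by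
  rcases (tsupport ψ).eq_empty_or_nonempty with hK | hK
  · have hzero : ∀ x : ℝ, ENNReal.ofReal |ψ x| ^ p * ENNReal.ofReal (x ^ r) = 0 := by
      intro x
      have : ψ x = 0 := image_eq_zero_of_notMem_tsupport (by simp [hK])
      rw [this]
      simp [ENNReal.zero_rpow_of_pos hp]
    rw [lintegral_congr hzero]
    simp
  · set a := sInf (tsupport ψ) with ha_def
    set b := sSup (tsupport ψ) with hb_def
    have hKc : IsCompact (tsupport ψ) := hcs
    have ha : a ∈ tsupport ψ := hKc.sInf_mem hK
    have ha0 : 0 < a := hsup ha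
    have hKsub : tsupport ψ ⊆ Icc a b := fun x hx =>
      ⟨csInf_le hKc.bddBelow hx, le_csSup hKc.bddAbove hx⟩
    obtain ⟨M, hM⟩ := hcs.exists_bound_of_continuous hc
    set B := max (a ^ r) (b ^ r) with hB_def
    have hBx : ∀ x ∈ Icc a b, x ^ r ≤ B := by
      intro x hx
      rcases le_or_gt 0 r with h | h
      · exact le_trans (Real.rpow_le_rpow (le_trans ha0.le hx.1) hx.2 h) (le_max_right _ _)
      · exact le_trans (Real.rpow_le_rpow_of_nonpos ha0 hx.1 h.le) (le_max_left _ _)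
    have hMp : ∀ x : ℝ, ENNReal.ofReal |ψ x| ^ p ≤ ENNReal.ofReal (M ^ p) := by
      intro x
      rw [ENNReal.ofReal_rpow_of_nonneg (abs_nonneg _) hp.le]
      exact ENNReal.ofReal_le_ofReal
        (Real.rpow_le_rpow (abs_nonneg _) (by simpa [Real.norm_eq_abs] using hM x) hp.le)
    have hptw : ∀ x ∈ Ioi (0:ℝ), ENNReal.ofReal |ψ x| ^ p * ENNReal.ofReal (x ^ r)
        ≤ (Icc a b).indicator (fun _ => ENNReal.ofReal (M ^ p) * ENNReal.ofReal B) x := by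
      intro x hx
      by_cases hxI : x ∈ Icc a b
      · rw [Set.indicator_of_mem hxI]
        exact mul_le_mul' (hMp x) (ENNReal.ofReal_le_ofReal (hBx x hxI))
      · have hz : ψ x = 0 := image_eq_zero_of_notMem_tsupport (fun h => hxI (hKsub h))
        rw [Set.indicator_of_notMem hxI, hz]
        simp [ENNReal.zero_rpow_of_pos hp]
    have hbound : ∫⁻ x in Ioi (0:ℝ), ENNReal.ofReal |ψ x| ^ p * ENNReal.ofReal (x ^ r)
        ≤ ENNReal.ofReal (M ^ p) * ENNReal.ofReal B * volume (Icc a b) := by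
      refine le_trans (setLIntegral_mono_ae' measurableSet_Ioi (ae_of_all _ hptw)) ?_
      refine le_trans (setLIntegral_le_lintegral _ _) ?_
      rw [lintegral_indicator_const measurableSet_Icc]
    exact ne_top_of_le_ne_top
      (ENNReal.mul_ne_top (ENNReal.mul_ne_top ofReal_ne_top ofReal_ne_top)
        (by rw [Real.volume_Icc]; exact ofReal_ne_top)) hbound

lemma real_eq_lint {c p : ℝ} (hp : 0 < p) (ψ : ℝ → ℝ) (hψ : Continuous ψ) :
    ∫ x in Ioi (0:ℝ), |ψ x| ^ p * x ^ c
      = (∫⁻ x in Ioi (0:ℝ), ENNReal.ofReal |ψ x| ^ p * ENNReal.ofReal (x ^ c)).toReal := by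
  rw [integral_eq_lintegral_of_nonneg_ae ?nn ?m]
  · congr 1
    refine setLIntegral_congr_fun_ae measurableSet_Ioi (ae_of_all _ fun x hx => ?_)
    rw [ENNReal.ofReal_mul (Real.rpow_nonneg (abs_nonneg _) _),
      ← ENNReal.ofReal_rpow_of_nonneg (abs_nonneg _) hp.le]
  case nn =>
    filter_upwards [ae_restrict_mem measurableSet_Ioi] with x hx using
      mul_nonneg (Real.rpow_nonneg (abs_nonneg _) _) (Real.rpow_nonneg (le_of_lt hx) _)
  case m =>
    exact ((hψ.abs.measurable.pow_const p).mul
      (measurable_id'.pow_const c)).aestronglyMeasurable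

/-- Hardy-type inequality: for `1 < p < ∞`, `l ∈ ℕ` and `r ∈ (-1, p-1)` there is `C > 0`
such that for every smooth compactly supported `φ` on `(0,∞)`,
`∫₀^∞ |φ|^p x^{r-lp} dx ≤ C Σ_{j≤l} ∫₀^∞ |φ^{(j)}|^p x^r dx`; i.e.
`W^l_{p,0}((0,∞), x^r dx) ↪ L_p((0,∞), x^{r-lp} dx)`. -/
theorem hardy_weighted_sobolev_embedding (p : ℝ) (hp : 1 < p) (l : ℕ) (hl : 1 ≤ l)
    (r : ℝ) (hr₁ : -1 < r) (hr₂ : r < p - 1) :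
    ∃ C : ℝ, 0 < C ∧ ∀ φ : ℝ → ℝ, ContDiff ℝ (⊤ : ℕ∞) φ → HasCompactSupport φ →
      tsupport φ ⊆ Ioi 0 →
      (∫ x in Ioi (0:ℝ), |φ x| ^ p * x ^ (r - l * p))
        ≤ C * ∑ j ∈ Finset.range (l + 1),
            ∫ x in Ioi (0:ℝ), |iteratedDeriv j φ x| ^ p * x ^ r := by
  have hp0 : (0:ℝ) < p := lt_trans one_pos hp
  obtain ⟨C, hC0, hCtop, hC⟩ := hardy_iter hp hr₂ l
  refine ⟨C.toReal, ENNReal.toReal_pos hC0 hCtop, fun φ hφ hcs hsup => ?_⟩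
  have hphi : ContDiff ℝ ((⊤ : ℕ∞) : WithTop ℕ∞) φ := hφ.of_le (by simp)
  set ψ := iteratedDeriv l φ with hψ_def
  have hψc : Continuous ψ := by
    rw [hψ_def, iteratedDeriv_eq_iterate]
    exact (ContDiff.iterate_deriv l hphi).continuous
  have hψsub := tsupport_iteratedDeriv_subset φ l
  have hψcs : HasCompactSupport ψ := hcs.mono' (subset_trans subset_closure hψsub)
  have hR := lint_finite (r := r) hp0 ψ hψc hψcs (hψsub.trans hsup)
  have key := hC φ hphi hcs hsup
  rw [real_eq_lint hp0 φ hφ.continuous]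
  refine le_trans (ENNReal.toReal_mono (ENNReal.mul_ne_top hCtop hR) key) ?_
  rw [ENNReal.toReal_mul, ← real_eq_lint hp0 ψ hψc]
  refine mul_le_mul_of_nonneg_left ?_ ENNReal.toReal_nonneg
  refine Finset.single_le_sum
    (f := fun j => ∫ x in Ioi (0:ℝ), |iteratedDeriv j φ x| ^ p * x ^ r) ?_
    (Finset.self_mem_range_succ l)
  intro j _
  exact setIntegral_nonneg measurableSet_Ioi fun x hx =>
    mul_nonneg (Real.rpow_nonneg (abs_nonneg _) _) (Real.rpow_nonneg (le_of_lt hx) _)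
end
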